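/- (Determinant bound for the Gram matrix) For vectors x_1,…,x_T ∈ ℝ^d with ‖x_t‖₂ ≤ L, the matrix A_T = λI_d + Σ_t x_t x_t^T satisfies det(A_T) ≤ (λ + T L²/d)^d. -/

import Mathlib

/-!
The determinant and the trace of the positive semidefinite matrix `A_T` are the product and the
sum of its eigenvalues, so AM–GM gives `det A_T ≤ (tr A_T / d) ^ d`. Finally
`tr A_T = d λ + ∑ t, ‖x_t‖² ≤ d λ + T L²`.
-/

open Matrix

open Finset in
theorem Real.prod_le_pow_sum_div_card {ι : Type*} (s : Finset ι) {z : ι → ℝ}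
    (hz : ∀ i ∈ s, 0 ≤ z i) : ∏ i ∈ s, z i ≤ ((∑ i ∈ s, z i) / #s) ^ #s := by
  rcases s.eq_empty_or_nonempty with rfl | hs
  · simp
  have amgm := Real.geom_mean_le_arith_mean s (fun _ => 1) z (fun _ _ => zero_le_one)
    (by simpa using hs) hz
  simp only [Real.rpow_one, sum_const, nsmul_eq_mul, mul_one, one_mul] at amgm
  calc ∏ i ∈ s, z i = ((∏ i ∈ s, z i) ^ (#s : ℝ)⁻¹) ^ #s :=
        (Real.rpow_inv_natCast_pow (prod_nonneg hz) (by simpa using hs.ne_empty)).symm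
    _ ≤ ((∑ i ∈ s, z i) / #s) ^ #s := by
      gcongr
      exact Real.rpow_nonneg (prod_nonneg hz) _

theorem Matrix.PosSemidef.det_le_trace_div_card_pow {n : Type*} [Fintype n] [DecidableEq n]
    {A : Matrix n n ℝ} (hA : A.PosSemidef) :
    A.det ≤ (A.trace / Fintype.card n) ^ Fintype.card n := by
  rw [hA.isHermitian.det_eq_prod_eigenvalues, hA.isHermitian.trace_eq_sum_eigenvalues]
  simpa using Real.prod_le_pow_sum_div_card Finset.univ fun i _ => hA.eigenvalues_nonneg i

theorem Matrix.posSemidef_smul_one_add_sum_vecMulVec_self {n ι : Type*} [Fintype n]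
    [DecidableEq n] [Fintype ι] {lam : ℝ} (hlam : 0 ≤ lam) (v : ι → n → ℝ) :
    (lam • (1 : Matrix n n ℝ) + ∑ t, vecMulVec (v t) (v t)).PosSemidef :=
  (PosSemidef.one.smul hlam).add <|
    posSemidef_sum _ fun t _ => by simpa using posSemidef_vecMulVec_self_star (v t)

theorem Matrix.trace_smul_one_add_sum_vecMulVec_self {n ι : Type*} [Fintype n]
    [DecidableEq n] [Fintype ι] (lam : ℝ) (v : ι → n → ℝ) :
    (lam • (1 : Matrix n n ℝ) + ∑ t, vecMulVec (v t) (v t)).trace =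
      Fintype.card n * lam + ∑ t, v t ⬝ᵥ v t := by
  simp [trace_sum, mul_comm]

theorem EuclideanSpace.dotProduct_ofLp_self {n : Type*} [Fintype n] (x : EuclideanSpace ℝ n) :
    x.ofLp ⬝ᵥ x.ofLp = ‖x‖ ^ 2 := by
  rw [← real_inner_self_eq_norm_sq, EuclideanSpace.inner_eq_star_dotProduct, star_trivial]

theorem stmt_7_general (d T : ℕ) (lam L : ℝ) (hlam : 0 < lam)
    (x : Fin T → EuclideanSpace ℝ (Fin d))
    (hx : ∀ t, ‖x t‖ ≤ L) :
    (lam • (1 : Matrix (Fin d) (Fin d) ℝ) +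
        ∑ t, Matrix.of (fun i j => x t i * x t j)).det ≤
      (lam + (T : ℝ) * L ^ 2 / (d : ℝ)) ^ d := by
  rcases Nat.eq_zero_or_pos d with rfl | hd
  · simp
  set A := lam • (1 : Matrix (Fin d) (Fin d) ℝ) + ∑ t, vecMulVec (x t).ofLp (x t).ofLp
  have hA : A.PosSemidef := posSemidef_smul_one_add_sum_vecMulVec_self hlam.le _
  have htrace : A.trace ≤ d * lam + T * L ^ 2 := by
    rw [trace_smul_one_add_sum_vecMulVec_self, Fintype.card_fin]
    simp_rw [EuclideanSpace.dotProduct_ofLp_self]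
    gcongr
    calc ∑ t, ‖x t‖ ^ 2 ≤ ∑ _t : Fin T, L ^ 2 := by gcongr with t; exact hx t
      _ = T * L ^ 2 := by simp
  calc A.det ≤ (A.trace / d) ^ d := by simpa using hA.det_le_trace_div_card_pow
    _ ≤ ((d * lam + T * L ^ 2) / d) ^ d := by
      gcongr
      exact div_nonneg hA.trace_nonneg d.cast_nonneg
    _ = (lam + T * L ^ 2 / d) ^ d := by field_simp

/-- Determinant bound for the Gram matrix: for vectors `x 1, …, x T` in
`ℝ^d` with `‖x t‖₂ ≤ L`, the regularized Gram matrix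
`A_T = λ I_d + ∑ t, x_t x_tᵀ` satisfies `det A_T ≤ (λ + T L²/d)^d`. -/
theorem stmt_7 (d T : ℕ) (hd : 1 ≤ d) (lam L : ℝ) (hlam : 0 < lam)
    (hL : 0 ≤ L) (x : Fin T → EuclideanSpace ℝ (Fin d))
    (hx : ∀ t, ‖x t‖ ≤ L) :
    (lam • (1 : Matrix (Fin d) (Fin d) ℝ) +
        ∑ t, Matrix.of (fun i j => x t i * x t j)).det ≤
      (lam + (T : ℝ) * L ^ 2 / (d : ℝ)) ^ d :=
  stmt_7_general d T lam L hlam x hx
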